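/- Let X = (x_1 ≥ … ≥ x_N) and Y = (y_1 ≥ … ≥ y_N) be 0-dimensional persistence diagrams with the same number of points. Then every partial matching between X and Y has cost at least min( max(Z), max(x_l, y_l)/2 ); in particular d_B(X,Y) ≥ min( max(Z), max(x_l, y_l)/2 ). -/

import Mathlib

open Classical in
/-- Penalty of each point of the two diagrams under a partial matching `f`:
a point `x i` matched to `y j` incurs `|x i - y j|`; an unmatched `x i`
(matched to the diagonal) incurs `x i / 2`; an unmatched `y j` incurs `y j / 2`
(a `y j` in the range of `f` is already accounted for, so it incurs `0`). -/
noncomputable def diagPenalty {N M : ℕ} (x : Fin N → ℝ) (y : Fin M → ℝ)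
    (f : Fin N → Option (Fin M)) : Fin N ⊕ Fin M → ℝ
  | Sum.inl i => (f i).elim (x i / 2) (fun j => |x i - y j|)
  | Sum.inr j => if ∃ i, f i = some j then 0 else y j / 2

/-- The cost of a partial matching: the maximum of `|x i - y j|` over matched
pairs, of `x i / 2` over unmatched `i`, and of `y j / 2` over unmatched `j`. -/
noncomputable def matchCost {N M : ℕ} (x : Fin N → ℝ) (y : Fin M → ℝ)
    (f : Fin N → Option (Fin M)) : ℝ :=
  ⨆ k, diagPenalty x y f k

/-- `f : Fin N → Option (Fin M)` is a partial matching when it is injective on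
matched indices, i.e. it induces a bijection between a subset of `Fin N` and a
subset of `Fin M`. -/
def IsPartialMatching {N M : ℕ} (f : Fin N → Option (Fin M)) : Prop :=
  ∀ i i' j, f i = some j → f i' = some j → i = i'

/-- The bottleneck distance between two 0-dimensional persistence diagrams,
given by their (decreasing) sequences of death times: the minimum cost over
all partial matchings. -/
noncomputable def bottleneck {N M : ℕ} (x : Fin N → ℝ) (y : Fin M → ℝ) : ℝ :=
  ⨅ f : {f : Fin N → Option (Fin M) // IsPartialMatching f}, matchCost x y f.1

/-!
Suppose a partial matching has cost `c < max (x l) (y l) / 2`, say with `y l ≤ x l`. Every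
`x i` with `i ≤ l` is then at least `x l > 2c`, so it cannot go to the diagonal; by pigeonhole
the `l + 1` points `x 0, …, x l` cannot all be matched among `y 0, …, y (l - 1)`, so some
`x i` with `i ≤ l` is matched to a `y j` with `j ≥ l`. Monotonicity gives
`x l - y l ≤ x i - y j ≤ c`. The case `x l ≤ y l` is symmetric.
-/

section Pigeonhole

variable {α : Type*} [LinearOrder α] [LocallyFiniteOrderBot α] {l : α}

theorem Finset.card_Iio_lt_card_Iic (l : α) : (Finset.Iio l).card < (Finset.Iic l).card := by
  rw [Finset.Iic_eq_cons_Iio, Finset.card_cons]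
  exact Nat.lt_succ_self _

theorem exists_le_of_forall_le_eq_some_of_injective {f : α → Option α}
    (hf : ∀ i i' j, f i = some j → f i' = some j → i = i')
    (h : ∀ i ≤ l, ∃ j, f i = some j) : ∃ i ≤ l, ∃ j, l ≤ j ∧ f i = some j := by
  by_contra! hcon
  have hg : ∀ i ≤ l, f i = some ((f i).getD l) := fun i hi => by
    obtain ⟨j, hj⟩ := h i hi
    simp [hj]
  refine (Finset.card_Iio_lt_card_Iic l).not_ge
    (Finset.card_le_card_of_injOn (fun i => (f i).getD l) (fun i hi => ?_) fun a ha b hb hab => ?_)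
  · have hi := Finset.mem_Iic.1 hi
    exact Finset.mem_Iio.2 (lt_of_not_ge fun hle => hcon i hi _ hle (hg i hi))
  · refine hf a b _ (hg a (Finset.mem_Iic.1 ha)) ?_
    rw [hg b (Finset.mem_Iic.1 hb)]
    exact congrArg some hab.symm

theorem exists_le_of_forall_le_exists_eq_some {f : α → Option α}
    (h : ∀ j ≤ l, ∃ i, f i = some j) : ∃ i, l ≤ i ∧ ∃ j ≤ l, f i = some j := by
  by_contra! hcon
  refine (Finset.card_Iio_lt_card_Iic l).not_ge
    (Finset.card_le_card_of_surjOn (fun i => (f i).getD l) fun j hj => ?_)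
  have hj := Finset.mem_Iic.1 hj
  obtain ⟨i, hi⟩ := h j hj
  exact ⟨i, Finset.mem_Iio.2 (lt_of_not_ge fun hle => hcon i hle j hj hi), by simp [hi]⟩

end Pigeonhole

section Matching

variable {N M : ℕ} {x : Fin N → ℝ} {y : Fin M → ℝ} {f : Fin N → Option (Fin M)}

theorem diagPenalty_le_matchCost (k : Fin N ⊕ Fin M) : diagPenalty x y f k ≤ matchCost x y f :=
  le_ciSup (Set.finite_range _).bddAbove k

theorem abs_sub_le_matchCost {i : Fin N} {j : Fin M} (h : f i = some j) :
    |x i - y j| ≤ matchCost x y f := by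
  simpa [diagPenalty, h] using diagPenalty_le_matchCost (x := x) (y := y) (f := f) (.inl i)

theorem exists_eq_some_of_matchCost_lt_left {i : Fin N} (h : matchCost x y f < x i / 2) :
    ∃ j, f i = some j := by
  cases hi : f i with
  | some j => exact ⟨j, rfl⟩
  | none =>
    have := diagPenalty_le_matchCost (x := x) (y := y) (f := f) (.inl i)
    simp only [diagPenalty, hi, Option.elim] at this
    linarith

theorem exists_eq_some_of_matchCost_lt_right {j : Fin M} (h : matchCost x y f < y j / 2) :
    ∃ i, f i = some j := by
  by_contra hj
  have := diagPenalty_le_matchCost (x := x) (y := y) (f := f) (.inr j)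
  simp only [diagPenalty, if_neg hj] at this
  linarith

theorem le_bottleneck_of_forall_le_matchCost {c : ℝ}
    (h : ∀ f : Fin N → Option (Fin M), IsPartialMatching f → c ≤ matchCost x y f) :
    c ≤ bottleneck x y :=
  have : Nonempty {f : Fin N → Option (Fin M) // IsPartialMatching f} :=
    ⟨⟨fun _ => none, fun _ _ _ h => by cases h⟩⟩
  le_ciInf fun f => h f.1 f.2

end Matching

section SameSize

variable {N : ℕ} {x y : Fin N → ℝ} {f : Fin N → Option (Fin N)}

theorem sub_le_matchCost_of_matchCost_lt_left (hf : IsPartialMatching f) (hx : Antitone x)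
    (hy : Antitone y) {l : Fin N} (h : matchCost x y f < x l / 2) :
    x l - y l ≤ matchCost x y f := by
  obtain ⟨i, hil, j, hlj, hij⟩ := exists_le_of_forall_le_eq_some_of_injective hf
    fun i hi => exists_eq_some_of_matchCost_lt_left (h.trans_le (by linarith [hx hi]))
  calc x l - y l ≤ x i - y j := by linarith [hx hil, hy hlj]
    _ ≤ |x i - y j| := le_abs_self _
    _ ≤ matchCost x y f := abs_sub_le_matchCost hij

theorem sub_le_matchCost_of_matchCost_lt_right (hx : Antitone x) (hy : Antitone y) {l : Fin N}
    (h : matchCost x y f < y l / 2) : y l - x l ≤ matchCost x y f := by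
  obtain ⟨i, hli, j, hjl, hij⟩ := exists_le_of_forall_le_exists_eq_some
    fun j hj => exists_eq_some_of_matchCost_lt_right (h.trans_le (by linarith [hy hj]))
  calc y l - x l ≤ y j - x i := by linarith [hx hli, hy hjl]
    _ ≤ |x i - y j| := by rw [abs_sub_comm]; exact le_abs_self _
    _ ≤ matchCost x y f := abs_sub_le_matchCost hij

theorem min_abs_sub_max_half_le_matchCost (hf : IsPartialMatching f) (hx : Antitone x)
    (hy : Antitone y) (l : Fin N) :
    min |x l - y l| (max (x l) (y l) / 2) ≤ matchCost x y f := by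
  rcases le_or_gt (max (x l) (y l) / 2) (matchCost x y f) with hc | hc
  · exact min_le_of_right_le hc
  refine min_le_of_left_le ?_
  rcases le_total (y l) (x l) with hxy | hxy
  · rw [max_eq_left hxy] at hc
    rw [abs_of_nonneg (sub_nonneg.2 hxy)]
    exact sub_le_matchCost_of_matchCost_lt_left hf hx hy hc
  · rw [max_eq_right hxy] at hc
    rw [abs_of_nonpos (sub_nonpos.2 hxy), neg_sub]
    exact sub_le_matchCost_of_matchCost_lt_right hx hy hc

end SameSize

theorem lumawig_lower_bound_equal_general {N : ℕ}
    (x y : Fin N → ℝ)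
    (hx : Antitone x) (hy : Antitone y)
    (l : Fin N)
    (hl : |x l - y l| = ⨆ i, |x i - y i|) :
    (∀ f : Fin N → Option (Fin N), IsPartialMatching f →
      min (⨆ i, |x i - y i|) (max (x l) (y l) / 2) ≤ matchCost x y f) ∧
    min (⨆ i, |x i - y i|) (max (x l) (y l) / 2) ≤ bottleneck x y := by
  have key : ∀ f : Fin N → Option (Fin N), IsPartialMatching f →
      min (⨆ i, |x i - y i|) (max (x l) (y l) / 2) ≤ matchCost x y f :=
    fun f hf => hl ▸ min_abs_sub_max_half_le_matchCost hf hx hy l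
  exact ⟨key, le_bottleneck_of_forall_le_matchCost key⟩

/-- For diagrams with the same number of points, every
partial matching has cost at least `min (max Z) (max (x l) (y l) / 2)`;
in particular `d_B(X,Y) ≥ min (max Z) (max (x l) (y l) / 2)`. -/
theorem lumawig_lower_bound_equal {N : ℕ} (hN : 1 ≤ N)
    (x y : Fin N → ℝ)
    (hx : Antitone x) (hy : Antitone y)
    (hxpos : ∀ i, 0 < x i) (hypos : ∀ i, 0 < y i)
    (l : Fin N)
    (hl : |x l - y l| = ⨆ i, |x i - y i|)
    (hlleast : ∀ i, |x i - y i| = (⨆ j, |x j - y j|) → l ≤ i) :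
    (∀ f : Fin N → Option (Fin N), IsPartialMatching f →
      min (⨆ i, |x i - y i|) (max (x l) (y l) / 2) ≤ matchCost x y f) ∧
    min (⨆ i, |x i - y i|) (max (x l) (y l) / 2) ≤ bottleneck x y :=
  lumawig_lower_bound_equal_general x y hx hy l hl
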